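/- With the assumptions above and s > p + d, the map F : W_P(C,s) → c₀(ℤ^d), F(u)_k = -λ_k u_k + N_k(u), is continuous, where W_P(C,s) carries the topology of c₀(ℤ^d). -/

import Mathlib

open scoped BigOperators ZeroAtInfty

noncomputable def znorm {d : ℕ} (k : Fin d → ℤ) : ℝ := ‖(fun i => (k i : ℝ) : Fin d → ℝ)‖

/-- The modified norm on `ℤ^d`: the norm of `k` for `k ≠ 0`, and `|0| := 1`. -/
noncomputable def mnorm {d : ℕ} (k : Fin d → ℤ) : ℝ := if k = 0 then 1 else znorm k

/-- The `v`-th Fourier coefficient `i^{|b|} v^b u_v` of the derivative `D^b u`. -/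
noncomputable def fac {d : ℕ} (u : (Fin d → ℤ) → ℂ) (b : Fin d → ℕ) (v : Fin d → ℤ) : ℂ :=
  Complex.I ^ (∑ i, b i) * (∏ i, ((v i : ℂ)) ^ b i) * u v

/-
On `W` every coefficient obeys `|u_v| ≤ C |v|^{-s}` (with `|0| = 1`), so each factor
`i^{|b|} v^b u_v` of a monomial of `N` is at most `C |v|^{r-s}`, a weight summable over `ℤ^d`
since `s - r > d`. Hence each `N_k` is a uniformly dominated series of continuous functions of
`u`, and the convolved weights bound `|F_k(u)|` uniformly on `W` by a summable sequence in `k`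
(the linear part by `L_u C |k|^{p-s}`). Such a uniformly small tail reduces continuity into `c₀`
to continuity of finitely many coordinates.
-/

open Filter Topology

theorem znorm_eq_norm {d : ℕ} (k : Fin d → ℤ) : znorm k = ‖k‖ := rfl

theorem mnorm_of_ne_zero {d : ℕ} {k : Fin d → ℤ} (hk : k ≠ 0) : mnorm k = znorm k := if_neg hk

theorem one_le_mnorm {d : ℕ} (k : Fin d → ℤ) : 1 ≤ mnorm k := by
  by_cases hk : k = 0
  · simp [mnorm, hk]
  obtain ⟨i, hi⟩ := Function.ne_iff.1 hk
  rw [mnorm_of_ne_zero hk, znorm_eq_norm]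
  calc (1 : ℝ) ≤ ‖k i‖ := by rw [Int.norm_eq_abs]; exact_mod_cast Int.one_le_abs hi
    _ ≤ ‖k‖ := norm_le_pi_norm k i

theorem mnorm_pos {d : ℕ} (k : Fin d → ℤ) : 0 < mnorm k := one_pos.trans_le (one_le_mnorm k)

theorem abs_le_mnorm {d : ℕ} (k : Fin d → ℤ) (i : Fin d) : |(k i : ℝ)| ≤ mnorm k := by
  by_cases hk : k = 0
  · simp [mnorm, hk]
  rw [mnorm_of_ne_zero hk, znorm_eq_norm, ← Int.norm_eq_abs]
  exact norm_le_pi_norm k i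

theorem summable_norm_rpow_neg {d : ℕ} {q : ℝ} (hq : (d : ℝ) < q) :
    Summable fun k : Fin d → ℤ => ‖k‖ ^ (-q) := by
  set L := Submodule.span ℤ (Set.range (Pi.basisFun ℝ (Fin d)))
  have hL : Summable fun z : L => ‖z‖ ^ (-q) :=
    ZLattice.summable_norm_rpow L (-q) (by rw [ZLattice.rank ℝ L]; simpa using hq)
  have hmem (k : Fin d → ℤ) : (((↑) : ℤ → ℝ) ∘ k) ∈ L :=
    (Module.Basis.mem_span_iff_repr_mem ℤ _ _).2 fun i => by simp
  have he : Function.Injective fun k => (⟨_, hmem k⟩ : L) := fun k k' h =>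
    funext fun i => by simpa using congrFun (congrArg Subtype.val h) i
  exact (hL.comp_injective he).congr fun k => rfl

theorem summable_mnorm_rpow_neg {d : ℕ} {q : ℝ} (hq : (d : ℝ) < q) :
    Summable fun k : Fin d → ℤ => mnorm k ^ (-q) := by
  refine (summable_norm_rpow_neg hq).congr_cofinite ?_
  filter_upwards [eventually_cofinite_ne 0] with k hk
  rw [mnorm_of_ne_zero hk, znorm_eq_norm]

theorem eventually_lt_znorm {d : ℕ} (K : ℝ) : ∀ᶠ k : Fin d → ℤ in cofinite, K < znorm k := by
  rw [← cocompact_eq_cofinite]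
  exact tendsto_norm_cocompact_atTop.eventually_gt_atTop K

noncomputable def decayWeight {d : ℕ} (C s : ℝ) (v : Fin d → ℤ) : ℝ := C * mnorm v ^ (-s)

theorem decayWeight_nonneg {d : ℕ} {C : ℝ} (hC : 0 ≤ C) (s : ℝ) :
    0 ≤ (decayWeight C s : (Fin d → ℤ) → ℝ) :=
  fun v => mul_nonneg hC (Real.rpow_nonneg (mnorm_pos v).le _)

theorem summable_decayWeight {d : ℕ} (C : ℝ) {s : ℝ} (hs : (d : ℝ) < s) :
    Summable (decayWeight C s : (Fin d → ℤ) → ℝ) :=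
  (summable_mnorm_rpow_neg hs).mul_left C

theorem norm_le_decayWeight {d : ℕ} {E : Type*} [SeminormedAddGroup E]
    {u : (Fin d → ℤ) → E} {C s : ℝ} (hu : ∀ k, k ≠ 0 → ‖u k‖ ≤ C / znorm k ^ s)
    (hu0 : ‖u 0‖ ≤ C) (k : Fin d → ℤ) : ‖u k‖ ≤ decayWeight C s k := by
  by_cases hk : k = 0
  · simpa [decayWeight, mnorm, hk] using hu0
  rw [decayWeight, mnorm_of_ne_zero hk, znorm_eq_norm, Real.rpow_neg (norm_nonneg k),
    ← div_eq_mul_inv, ← znorm_eq_norm]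
  exact hu k hk

theorem norm_fac_le {d : ℕ} (u : (Fin d → ℤ) → ℂ) (b : Fin d → ℕ) (v : Fin d → ℤ) :
    ‖fac u b v‖ ≤ mnorm v ^ (∑ i, b i) * ‖u v‖ := by
  rw [fac, norm_mul, norm_mul, norm_pow, Complex.norm_I, one_pow, one_mul, norm_prod,
    ← Finset.prod_pow_eq_pow_sum]
  gcongr with i
  rw [norm_pow, Complex.norm_intCast]
  exact pow_le_pow_left₀ (abs_nonneg _) (abs_le_mnorm v i) _

theorem norm_fac_le_decayWeight {d r : ℕ} {u : (Fin d → ℤ) → ℂ} {C s : ℝ}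
    (hu : ∀ v, ‖u v‖ ≤ decayWeight C s v) {b : Fin d → ℕ} (hb : ∑ i, b i ≤ r)
    (v : Fin d → ℤ) : ‖fac u b v‖ ≤ decayWeight C (s - r) v := by
  have hv := mnorm_pos v
  calc ‖fac u b v‖ ≤ mnorm v ^ r * (C * mnorm v ^ (-s)) :=
        (norm_fac_le u b v).trans <| mul_le_mul
          (pow_le_pow_right₀ (one_le_mnorm v) hb) (hu v) (norm_nonneg _) (by positivity)
    _ = decayWeight C (s - r) v := by
        rw [decayWeight, neg_sub, sub_eq_add_neg, Real.rpow_add hv, Real.rpow_natCast]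
        ring

theorem ZeroAtInftyContinuousMap.continuous_apply {α E : Type*} [TopologicalSpace α]
    [NormedAddCommGroup E] (a : α) : Continuous fun f : C₀(α, E) => f a :=
  (continuous_eval_const (F := BoundedContinuousFunction α E) a).comp isometry_toBCF.continuous

theorem ZeroAtInftyContinuousMap.continuous_of_continuous_apply_of_eventually_norm_le
    {X α E : Type*} [TopologicalSpace X] [TopologicalSpace α] [NormedAddCommGroup E]
    {G : X → C₀(α, E)} (hG : ∀ k, Continuous fun x => G x k) {h : α → ℝ}
    (h0 : Tendsto h cofinite (𝓝 0)) (hGh : ∀ᶠ k in cofinite, ∀ x, ‖G x k‖ ≤ h k) :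
    Continuous G := by
  refine continuous_iff_continuousAt.2 fun x₀ => Metric.tendsto_nhds.2 fun ε hε => ?_
  have hε4 : 0 < ε / 4 := by positivity
  set S := {k | ¬ ∀ x, ‖G x k‖ ≤ ε / 4}
  have hS : S.Finite := eventually_cofinite.1 <| by
    filter_upwards [hGh, h0.eventually (eventually_le_nhds hε4)] with k hk hhk x
    exact (hk x).trans hhk
  filter_upwards [hS.eventually_all.2 fun k _ =>
    Metric.tendsto_nhds.1 (hG k).continuousAt (ε / 2) (by positivity)] with x hx
  refine lt_of_le_of_lt ?_ (half_lt_self hε)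
  rw [← dist_toBCF_eq_dist, BoundedContinuousFunction.dist_le (by positivity)]
  intro k
  by_cases hk : k ∈ S
  · exact (hx k hk).le
  · simp only [S, Set.mem_ofPred_eq, not_not] at hk
    calc dist (G x k) (G x₀ k) ≤ ‖G x k‖ + ‖G x₀ k‖ := dist_le_norm_add_norm _ _
      _ ≤ ε / 4 + ε / 4 := add_le_add (hk x) (hk x₀)
      _ = ε / 2 := by ring

section FiberProduct

variable {ι : Type*} {g : ι → ℝ}

theorem summable_fin_pi_prod (hg0 : 0 ≤ g) (hg : Summable g) :
    ∀ l : ℕ, Summable fun v : Fin l → ι => ∏ m, g (v m)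
  | 0 => .of_finite
  | l + 1 => by
    refine ((Fin.consEquiv fun _ => ι).summable_iff).1 ?_
    refine (hg.mul_of_nonneg (summable_fin_pi_prod hg0 hg l) hg0
      fun _ => Finset.prod_nonneg fun _ _ => hg0 _).congr fun _ => ?_
    simp [Fin.prod_univ_succ]

theorem norm_prod_le_prod_of_norm_le {R : Type*} [NormedCommRing R] [NormOneClass R] {l : ℕ}
    {F : Fin l → ι → R} (hF : ∀ m x, ‖F m x‖ ≤ g x) (v : Fin l → ι) :
    ‖∏ m, F m (v m)‖ ≤ ∏ m, g (v m) :=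
  (Finset.norm_prod_le _ _).trans <|
    Finset.prod_le_prod (fun _ _ => norm_nonneg _) fun m _ => hF m _

variable [AddCommMonoid ι]

theorem summable_tsum_fiber_prod (hg0 : 0 ≤ g) (hg : Summable g) (l : ℕ) :
    Summable fun k : ι => ∑' v : {v : Fin l → ι // ∑ m, v m = k}, ∏ m, g (v.1 m) :=
  ((summable_fin_pi_prod hg0 hg l).hasSum.tsum_fiberwise _).summable

theorem norm_tsum_fiber_prod_le {R : Type*} [NormedCommRing R] [NormOneClass R] {l : ℕ}
    {F : Fin l → ι → R} (hF : ∀ m x, ‖F m x‖ ≤ g x) (hg0 : 0 ≤ g) (hg : Summable g) (k : ι) :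
    ‖∑' v : {v : Fin l → ι // ∑ m, v m = k}, ∏ m, F m (v.1 m)‖ ≤
      ∑' v : {v : Fin l → ι // ∑ m, v m = k}, ∏ m, g (v.1 m) :=
  tsum_of_norm_bounded
    ((summable_fin_pi_prod hg0 hg l).comp_injective Subtype.val_injective).hasSum fun v => norm_prod_le_prod_of_norm_le hF v.1

theorem continuous_tsum_fiber_prod {X R : Type*} [TopologicalSpace X] [NormedCommRing R]
    [NormOneClass R] [CompleteSpace R] {l : ℕ} {F : X → Fin l → ι → R}
    (hF : ∀ m x, Continuous fun a => F a m x) (hFg : ∀ a m x, ‖F a m x‖ ≤ g x)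
    (hg0 : 0 ≤ g) (hg : Summable g) (k : ι) :
    Continuous fun a => ∑' v : {v : Fin l → ι // ∑ m, v m = k}, ∏ m, F a m (v.1 m) :=
  continuous_tsum (fun _ => continuous_finsetProd _ fun m _ => hF m _)
    ((summable_fin_pi_prod hg0 hg l).comp_injective Subtype.val_injective)
    fun v a => norm_prod_le_prod_of_norm_le (hFg a) v.1

end FiberProduct

noncomputable def polyNonlinearity {d M : ℕ} {l : Fin M → ℕ} (a : Fin M → ℂ)
    (β : (t : Fin M) → Fin (l t) → Fin d → ℕ) (u : (Fin d → ℤ) → ℂ) (k : Fin d → ℤ) : ℂ :=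
  ∑ t : Fin M, a t * ∑' v : {v : Fin (l t) → (Fin d → ℤ) // ∑ m, v m = k},
    ∏ m, fac u (β t m) (v.1 m)

noncomputable def polyMajorant {ι : Type*} [AddCommMonoid ι] {M : ℕ} (l : Fin M → ℕ)
    (a : Fin M → ℂ) (g : ι → ℝ) (k : ι) : ℝ :=
  ∑ t : Fin M, ‖a t‖ * ∑' v : {v : Fin (l t) → ι // ∑ m, v m = k}, ∏ m, g (v.1 m)

theorem summable_polyMajorant {ι : Type*} [AddCommMonoid ι] {M : ℕ} (l : Fin M → ℕ)
    (a : Fin M → ℂ) {g : ι → ℝ} (hg0 : 0 ≤ g) (hg : Summable g) :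
    Summable (polyMajorant l a g) :=
  summable_sum fun t _ => (summable_tsum_fiber_prod hg0 hg (l t)).mul_left _

section PolyNonlinearity

variable {d r M : ℕ} {l : Fin M → ℕ} {a : Fin M → ℂ} {β : (t : Fin M) → Fin (l t) → Fin d → ℕ}
  {C s : ℝ}

theorem norm_polyNonlinearity_le (hβ : ∀ t m, ∑ i, β t m i ≤ r) (hC : 0 ≤ C)
    (hsr : (d : ℝ) < s - r) {u : (Fin d → ℤ) → ℂ} (hu : ∀ v, ‖u v‖ ≤ decayWeight C s v)
    (k : Fin d → ℤ) :
    ‖polyNonlinearity a β u k‖ ≤ polyMajorant l a (decayWeight C (s - r)) k :=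
  (norm_sum_le _ _).trans <| Finset.sum_le_sum fun t _ => by
    rw [norm_mul]
    exact mul_le_mul_of_nonneg_left (norm_tsum_fiber_prod_le
      (fun m => norm_fac_le_decayWeight hu (hβ t m)) (decayWeight_nonneg hC _)
      (summable_decayWeight C hsr) k) (norm_nonneg _)

theorem continuous_polyNonlinearity_apply (hβ : ∀ t m, ∑ i, β t m i ≤ r) (hC : 0 ≤ C)
    (hsr : (d : ℝ) < s - r) {X : Type*} [TopologicalSpace X] {φ : X → C₀(Fin d → ℤ, ℂ)}
    (hφ : Continuous φ) (hφC : ∀ x v, ‖φ x v‖ ≤ decayWeight C s v) (k : Fin d → ℤ) :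
    Continuous fun x => polyNonlinearity a β (φ x) k :=
  continuous_finsetSum _ fun t _ => continuous_const.mul <|
    continuous_tsum_fiber_prod
      (fun _ v => continuous_const.mul ((ZeroAtInftyContinuousMap.continuous_apply v).comp hφ))
      (fun x m => norm_fac_le_decayWeight (hφC x) (hβ t m)) (decayWeight_nonneg hC _)
      (summable_decayWeight C hsr) k

end PolyNonlinearity

theorem norm_neg_ofReal_mul_le_decayWeight {d : ℕ} {k : Fin d → ℤ} (hk : k ≠ 0)
    {lam Ls Lu p C s : ℝ} (hLs : 0 ≤ Ls)
    (hlam : Ls * znorm k ^ p ≤ lam ∧ lam ≤ Lu * znorm k ^ p) {z : ℂ}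
    (hz : ‖z‖ ≤ decayWeight C s k) : ‖-(lam : ℂ) * z‖ ≤ Lu * decayWeight C (s - p) k := by
  have hk_pos : 0 < znorm k := mnorm_of_ne_zero hk ▸ mnorm_pos k
  have hlam0 : 0 ≤ lam := (mul_nonneg hLs (Real.rpow_nonneg hk_pos.le _)).trans hlam.1
  rw [norm_mul, norm_neg, Complex.norm_real, Real.norm_of_nonneg hlam0]
  calc lam * ‖z‖ ≤ Lu * znorm k ^ p * (C * znorm k ^ (-s)) := by
        rw [decayWeight, mnorm_of_ne_zero hk] at hz
        exact mul_le_mul hlam.2 hz (norm_nonneg _) (hlam0.trans hlam.2)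
    _ = Lu * decayWeight C (s - p) k := by
        rw [decayWeight, mnorm_of_ne_zero hk, neg_sub, sub_eq_add_neg, Real.rpow_add hk_pos]
        ring

theorem stmt14_general {d r M : ℕ} (p s C K Ls Lu : ℝ)
    (hp : (r : ℝ) < p) (hLs : 0 < Ls) (hC : 0 < C) (hs : p + d < s)
    (lam : (Fin d → ℤ) → ℝ)
    (hlam : ∀ k : Fin d → ℤ, K < znorm k → Ls * znorm k ^ p ≤ lam k ∧
      lam k ≤ Lu * znorm k ^ p)
    (l : Fin M → ℕ) (a : Fin M → ℂ)
    (β : (t : Fin M) → Fin (l t) → Fin d → ℕ) (hβ : ∀ t m, (∑ i, β t m i) ≤ r)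
    (G : {u : C₀((Fin d → ℤ), ℂ) //
        (∀ k : Fin d → ℤ, k ≠ 0 → ‖u k‖ ≤ C / znorm k ^ s) ∧
        ‖u 0‖ ≤ C} → C₀((Fin d → ℤ), ℂ))
    (hG : ∀ u (k : Fin d → ℤ), G u k = -(lam k : ℂ) * u.1 k +
      ∑ t : Fin M, a t * ∑' v : {v : Fin (l t) → (Fin d → ℤ) // ∑ m, v m = k},
        ∏ m, fac (u.1 : (Fin d → ℤ) → ℂ) (β t m) (v.1 m)) :
    Continuous G := by
  have hsr : (d : ℝ) < s - r := by linarith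
  refine ZeroAtInftyContinuousMap.continuous_of_continuous_apply_of_eventually_norm_le
    (h := Lu • decayWeight C (s - p) + polyMajorant l a (decayWeight C (s - r)))
    (fun k => ?_) ?_ ?_
  · simp only [hG]
    exact (continuous_const.mul ((ZeroAtInftyContinuousMap.continuous_apply k).comp
      continuous_subtype_val)).add (continuous_polyNonlinearity_apply hβ hC.le hsr
      continuous_subtype_val (fun u => norm_le_decayWeight u.2.1 u.2.2) k)
  · exact (((summable_decayWeight C (by linarith)).const_smul Lu).add
      (summable_polyMajorant l a (decayWeight_nonneg hC.le _)
        (summable_decayWeight C hsr))).tendsto_cofinite_zero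
  · filter_upwards [eventually_cofinite_ne 0, eventually_lt_znorm K] with k hk0 hkK u
    have hu := norm_le_decayWeight u.2.1 u.2.2
    rw [hG]
    exact (norm_add_le _ _).trans (add_le_add
      (norm_neg_ofReal_mul_le_decayWeight hk0 hLs.le (hlam k hkK) (hu k))
      (norm_polyNonlinearity_le hβ hC.le hsr hu k))

/-- Continuity of the vector field `F(u)_k = -λ_k u_k + N_k(u)` of a dissipative PDE,
where `N` is a polynomial (a finite sum of `M` monomials, the `t`-th of degree `l t`
with derivative multi-indices `β t m` of order `≤ r`), on `W = W_P(C,s)` with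
`s > p + d`, as a map `W → c₀(ℤ^d)` where `W` carries the `c₀` (sup-norm) topology. -/
theorem stmt14 {d r M : ℕ} (hd : 1 ≤ d) (p s C K Ls Lu : ℝ)
    (hp : (r : ℝ) < p) (hLs : 0 < Ls) (hLu : 0 < Lu) (hC : 0 < C) (hs : p + d < s)
    (lam : (Fin d → ℤ) → ℝ)
    (hlam : ∀ k : Fin d → ℤ, K < znorm k → Ls * znorm k ^ p ≤ lam k ∧
      lam k ≤ Lu * znorm k ^ p)
    (l : Fin M → ℕ) (hl : ∀ t, 1 ≤ l t) (a : Fin M → ℂ)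
    (β : (t : Fin M) → Fin (l t) → Fin d → ℕ) (hβ : ∀ t m, (∑ i, β t m i) ≤ r)
    (G : {u : C₀((Fin d → ℤ), ℂ) //
        (∀ k : Fin d → ℤ, k ≠ 0 → ‖u k‖ ≤ C / znorm k ^ s) ∧
        ‖u 0‖ ≤ C} → C₀((Fin d → ℤ), ℂ))
    (hG : ∀ u (k : Fin d → ℤ), G u k = -(lam k : ℂ) * u.1 k +
      ∑ t : Fin M, a t * ∑' v : {v : Fin (l t) → (Fin d → ℤ) // ∑ m, v m = k},
        ∏ m, fac (u.1 : (Fin d → ℤ) → ℂ) (β t m) (v.1 m)) :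
    Continuous G :=
  stmt14_general p s C K Ls Lu hp hLs hC hs lam hlam l a β hβ G hG
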